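/- If R is a 𝒰_𝒳-hereditary ring, then every 𝒳-injective R-module U has injective dimension at most 1. -/

import Mathlib

/-!
Embed `U` into an injective module `E` and let `C = E / U`. Since `Ext¹(I, U) = 0`, every map
`I → C` from a left ideal lifts to `E`, and then extends from `I` to `R` because `E` is injective;
so `C` satisfies Baer's criterion. With `C` and `E` injective, the exact segment
`Ext¹(N, C) → Ext²(N, U) → Ext²(N, E)` forces `Ext²(N, U) = 0`.

The two pieces of the long exact `Ext` sequence that are used (this one, and the surjectivity of
`Hom(I, E) → Hom(I, C)`) are obtained by diagram chases in a projective resolution of the first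
argument.
-/

open CategoryTheory Limits Opposite

/-- `Ext^n_R(X, M) = 0`, phrased via the `Ext` bifunctor on `ModuleCat R`. -/
def extZero (R : Type) [Ring R] (n : ℕ) (X M : ModuleCat R) : Prop :=
  IsZero (((Ext ℤ (ModuleCat R) n).obj (op X)).obj M)

/-- `M` is `𝒳`-injective if `Ext¹(X, M) = 0` for every `X ∈ 𝒳`. -/
def IsXInjective (R : Type) [Ring R] (𝒳 : ModuleCat R → Prop) (M : ModuleCat R) : Prop :=
  ∀ X, 𝒳 X → extZero R 1 X M

variable {R : Type} [Ring R]

theorem extZero_succ_iff {X M : ModuleCat R} (P : ProjectiveResolution X) (n : ℕ) :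
    extZero R (n + 1) X M ↔
      ∀ φ : P.complex.X (n + 1) ⟶ M, P.complex.d (n + 2) (n + 1) ≫ φ = 0 →
        ∃ ψ : P.complex.X n ⟶ M, P.complex.d (n + 1) n ≫ ψ = φ := by
  rw [extZero, (P.isoExt (n + 1) M).isZero_iff, ← HomologicalComplex.exactAt_iff_isZero_homology,
    HomologicalComplex.exactAt_iff' _ n (n + 1) (n + 2) (by simp) (by simp),
    ShortComplex.moduleCat_exact_iff]
  rfl

theorem extZero_succ_of_injective (X : ModuleCat R) {E : ModuleCat R} [Injective E] (n : ℕ) :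
    extZero R (n + 1) X E := by
  let P := ProjectiveResolution.of X
  exact (extZero_succ_iff P n).2 fun φ hφ =>
    ⟨(P.exact_succ n).descToInjective φ hφ, (P.exact_succ n).comp_descToInjective φ hφ⟩

namespace CategoryTheory.ShortComplex.ShortExact

variable {S : ShortComplex (ModuleCat R)} (hS : S.ShortExact)
include hS

theorem extZero_X₁_of_extZero_X₃ (N : ModuleCat R) (n : ℕ) (h₃ : extZero R (n + 1) N S.X₃)
    (h₂ : extZero R (n + 2) N S.X₂) : extZero R (n + 2) N S.X₁ := by
  have := hS.mono_f
  have := hS.epi_g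
  let P := ProjectiveResolution.of N
  rw [extZero_succ_iff P] at h₃
  rw [extZero_succ_iff P (n + 1)] at h₂ ⊢
  intro φ hφ
  obtain ⟨ψ, hψ⟩ := h₂ (φ ≫ S.f) (by rw [reassoc_of% hφ, zero_comp])
  obtain ⟨χ, hχ⟩ := h₃ (ψ ≫ S.g) (by rw [reassoc_of% hψ, S.zero, comp_zero])
  obtain ⟨χ', hχ'⟩ := Projective.factors χ S.g
  obtain ⟨τ, hτ⟩ := hS.exact.lift' (ψ - P.complex.d (n + 1) n ≫ χ') (by simp [hχ', hχ])
  refine ⟨τ, (cancel_mono S.f).1 ?_⟩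
  simp [hτ, hψ]

theorem exists_lift_of_extZero_one {X : ModuleCat R} (hX : extZero R 1 X S.X₁) (f : X ⟶ S.X₃) :
    ∃ g : X ⟶ S.X₂, g ≫ S.g = f := by
  have := hS.mono_f
  have := hS.epi_g
  let P := ProjectiveResolution.of X
  rw [extZero_succ_iff P 0] at hX
  let e := HomologicalComplex.singleObjXSelf (ComplexShape.down ℕ) 0 X
  let ε : P.complex.X 0 ⟶ X := P.π.f 0 ≫ e.hom
  obtain ⟨ψ, hψ⟩ := Projective.factors (ε ≫ f) S.g
  obtain ⟨τ, hτ⟩ := hS.exact.lift' (P.complex.d 1 0 ≫ ψ)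
    (by simp only [Category.assoc, hψ, ε, P.complex_d_comp_π_f_zero_assoc, zero_comp])
  obtain ⟨σ, hσ⟩ := hX τ ((cancel_mono S.f).1 (by simp [hτ]))
  obtain ⟨g, hg : P.π.f 0 ≫ g = ψ - σ ≫ S.f⟩ :=
    P.exact₀.desc' (ψ - σ ≫ S.f) (by simp [reassoc_of% hσ, hτ])
  refine ⟨e.inv ≫ g, (cancel_epi ε).1 ?_⟩
  simp only [ε, Category.assoc, Iso.hom_inv_id_assoc, reassoc_of% hg, Preadditive.sub_comp,
    S.zero, comp_zero, sub_zero, hψ]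

theorem injective_X₃_of_extZero_ideal [Injective S.X₂]
    (hI : ∀ I : Ideal R, extZero R 1 (ModuleCat.of R I) S.X₁) : Injective S.X₃ := by
  have hX₂ : Module.Injective R S.X₂ := Module.injective_module_of_injective_object R S.X₂
  have hBaer : Module.Baer R S.X₃ := fun I g => by
    obtain ⟨g', hg'⟩ := hS.exists_lift_of_extZero_one (hI I) (ModuleCat.ofHom g)
    obtain ⟨e, he⟩ := Module.Baer.of_injective hX₂ I g'.hom
    refine ⟨S.g.hom ∘ₗ e, fun x hx => ?_⟩
    rw [LinearMap.comp_apply, he x hx, ← ModuleCat.comp_apply, hg']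
    rfl
  exact Module.injective_object_of_injective_module (inj := hBaer.injective)

end CategoryTheory.ShortComplex.ShortExact

/-- If `R` is `𝒰_𝒳`-hereditary (every left ideal `I` satisfies `Ext¹(I, U) = 0` for all
`𝒳`-injective `U`), then every `𝒳`-injective module has injective dimension at most one. -/
theorem stmt7 (R : Type) [Ring R] (𝒳 : ModuleCat R → Prop)
    (hher : ∀ I : Ideal R, ∀ U : ModuleCat R, IsXInjective R 𝒳 U →
      extZero R 1 (ModuleCat.of R (↥I)) U) :
    ∀ U : ModuleCat R, IsXInjective R 𝒳 U → ∀ N : ModuleCat R, extZero R 2 N U := by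
  intro U hU N
  let S := ShortComplex.mk _ _ (cokernel.condition (Injective.ι U))
  have hS : S.ShortExact :=
    { exact := ShortComplex.exact_of_g_is_cokernel _ (cokernelIsCokernel S.f) }
  have : Injective S.X₃ := hS.injective_X₃_of_extZero_ideal fun I => hher I U hU
  exact hS.extZero_X₁_of_extZero_X₃ N 0 (extZero_succ_of_injective N 0)
    (extZero_succ_of_injective N 1)
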